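/- arXiv:1608.05249 — 4 statements merged into one kernel-verified Lean document; each statement's English description precedes it below -/
import Mathlib

section
/- Let X_+, X_- : (r_e, ∞) → ℂ satisfy X_+' = iα X_+ + (iβ + γ) X_- and X_-' = -iα X_- - (iβ - γ) X_+ with α, β, γ real continuous. Then the derivative of the function F(r) = i(conj(X_+) X_- - conj(X_-) X_+) equals 2α(conj(X_+)X_- + conj(X_-)X_+) + 2β(|X_+|² + |X_-|²); in particular F is real-valued and F'(r) ≥ 2(β(r) - |α(r)|)(|X_+(r)|² + |X_-(r)|²). -/
open Complex Set ComplexConjugate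

theorem Complex.im_I_mul_conj_mul_sub_conj_mul (a b : ℂ) :
    (I * (conj a * b - conj b * a)).im = 0 := by
  simp only [mul_im, mul_re, sub_re, sub_im, conj_re, conj_im, I_re, I_im]
  ring

theorem Complex.conj_mul_add_conj_mul (a b : ℂ) :
    conj a * b + conj b * a = (2 * (conj a * b).re : ℝ) := by
  rw [← add_conj, map_mul, conj_conj, mul_comm a]

theorem Complex.abs_two_mul_re_conj_mul_le (a b : ℂ) :
    |2 * (conj a * b).re| ≤ ‖a‖ ^ 2 + ‖b‖ ^ 2 := by
  have hre : |(conj a * b).re| ≤ ‖a‖ * ‖b‖ := by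
    simpa only [norm_mul, norm_conj] using abs_re_le_norm (conj a * b)
  rw [abs_mul, abs_two]
  nlinarith [sq_nonneg (‖a‖ - ‖b‖)]

theorem HasDerivAt.I_mul_conj_mul_sub_conj_mul {f g : ℝ → ℂ} {f' g' : ℂ} {r : ℝ}
    (hf : HasDerivAt f f' r) (hg : HasDerivAt g g' r) :
    HasDerivAt (fun s => I * (conj (f s) * g s - conj (g s) * f s))
      (I * (conj f' * g r + conj (f r) * g' - (conj g' * f r + conj (g r) * f'))) r :=
  ((hf.star.mul hg).sub (hg.star.mul hf)).const_mul I

-- The γ-coupling is anti-Hermitian, so its contributions cancel.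
theorem Complex.I_mul_conj_mul_sub_conj_mul_of_system (α β γ : ℝ) (a b : ℂ) :
    let a' := I * α * a + (I * β + γ) * b
    let b' := -(I * α) * b - (I * β - γ) * a
    I * (conj a' * b + conj a * b' - (conj b' * a + conj b * a')) =
      2 * α * (conj a * b + conj b * a) + 2 * β * ((‖a‖ : ℂ) ^ 2 + (‖b‖ : ℂ) ^ 2) := by
  intro a' b'
  simp only [a', b', ← conj_mul', map_add, map_sub, map_neg, map_mul, conj_I, conj_ofReal]
  linear_combination (-(2 * (α : ℂ) * (conj a * b + conj b * a)
    + 2 * (β : ℂ) * (conj a * a + conj b * b))) * I_sq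

theorem Complex.two_mul_sub_abs_mul_le_re (α β : ℝ) (a b : ℂ) :
    2 * (β - |α|) * (‖a‖ ^ 2 + ‖b‖ ^ 2) ≤
      (2 * α * (conj a * b + conj b * a) + 2 * β * ((‖a‖ : ℂ) ^ 2 + (‖b‖ : ℂ) ^ 2)).re := by
  have hre : (2 * α * (conj a * b + conj b * a) + 2 * β * ((‖a‖ : ℂ) ^ 2 + (‖b‖ : ℂ) ^ 2)).re
      = 2 * (α * (2 * (conj a * b).re)) + 2 * β * (‖a‖ ^ 2 + ‖b‖ ^ 2) := by
    rw [conj_mul_add_conj_mul]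
    norm_cast
    ring
  have hcross : |α * (2 * (conj a * b).re)| ≤ |α| * (‖a‖ ^ 2 + ‖b‖ ^ 2) := by
    rw [abs_mul]
    exact mul_le_mul_of_nonneg_left (abs_two_mul_re_conj_mul_le a b) (abs_nonneg α)
  rw [hre]
  linarith [neg_abs_le (α * (2 * (conj a * b).re))]

theorem stmt1_general (re : ℝ) (Xp Xm : ℝ → ℂ) (α β γ : ℝ → ℝ)
    (hXp : ∀ r ∈ Ioi re, HasDerivAt Xp
      (Complex.I * (α r) * Xp r + (Complex.I * (β r) + (γ r)) * Xm r) r)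
    (hXm : ∀ r ∈ Ioi re, HasDerivAt Xm
      (-(Complex.I * (α r)) * Xm r - (Complex.I * (β r) - (γ r)) * Xp r) r) :
    ∀ r ∈ Ioi re,
      (Complex.I * ((starRingEnd ℂ) (Xp r) * Xm r - (starRingEnd ℂ) (Xm r) * Xp r)).im = 0 ∧
      HasDerivAt (fun s => (Complex.I * ((starRingEnd ℂ) (Xp s) * Xm s -
          (starRingEnd ℂ) (Xm s) * Xp s)).re)
        ((2 * (α r) * ((starRingEnd ℂ) (Xp r) * Xm r + (starRingEnd ℂ) (Xm r) * Xp r)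
          + 2 * (β r) * ((‖Xp r‖ : ℂ) ^ 2 + (‖Xm r‖ : ℂ) ^ 2)).re) r ∧
      (2 * (α r) * ((starRingEnd ℂ) (Xp r) * Xm r + (starRingEnd ℂ) (Xm r) * Xp r)
          + 2 * (β r) * ((‖Xp r‖ : ℂ) ^ 2 + (‖Xm r‖ : ℂ) ^ 2)).re ≥
        2 * (β r - |α r|) * (‖Xp r‖ ^ 2 + ‖Xm r‖ ^ 2) := by
  intro r hr
  refine ⟨im_I_mul_conj_mul_sub_conj_mul _ _, ?_, two_mul_sub_abs_mul_le_re _ _ _ _⟩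
  have hF := (hXp r hr).I_mul_conj_mul_sub_conj_mul (hXm r hr)
  rw [I_mul_conj_mul_sub_conj_mul_of_system] at hF
  exact reCLM.hasFDerivAt.comp_hasDerivAt r hF

theorem stmt1 (re : ℝ) (Xp Xm : ℝ → ℂ) (α β γ : ℝ → ℝ)
    (hα : ContinuousOn α (Ioi re)) (hβ : ContinuousOn β (Ioi re))
    (hγ : ContinuousOn γ (Ioi re))
    (hXp : ∀ r ∈ Ioi re, HasDerivAt Xp
      (Complex.I * (α r) * Xp r + (Complex.I * (β r) + (γ r)) * Xm r) r)
    (hXm : ∀ r ∈ Ioi re, HasDerivAt Xm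
      (-(Complex.I * (α r)) * Xm r - (Complex.I * (β r) - (γ r)) * Xp r) r) :
    ∀ r ∈ Ioi re,
      (Complex.I * ((starRingEnd ℂ) (Xp r) * Xm r - (starRingEnd ℂ) (Xm r) * Xp r)).im = 0 ∧
      HasDerivAt (fun s => (Complex.I * ((starRingEnd ℂ) (Xp s) * Xm s -
          (starRingEnd ℂ) (Xm s) * Xp s)).re)
        ((2 * (α r) * ((starRingEnd ℂ) (Xp r) * Xm r + (starRingEnd ℂ) (Xm r) * Xp r)
          + 2 * (β r) * ((‖Xp r‖ : ℂ) ^ 2 + (‖Xm r‖ : ℂ) ^ 2)).re) r ∧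
      (2 * (α r) * ((starRingEnd ℂ) (Xp r) * Xm r + (starRingEnd ℂ) (Xm r) * Xp r)
          + 2 * (β r) * ((‖Xp r‖ : ℂ) ^ 2 + (‖Xm r‖ : ℂ) ^ 2)).re ≥
        2 * (β r - |α r|) * (‖Xp r‖ ^ 2 + ‖Xm r‖ ^ 2) :=
  stmt1_general re Xp Xm α β γ hXp hXm
end

section
/- Let Φ : (r_e, r_1] → ℂⁿ be a differentiable function satisfying |d/dr |Φ(r)|²| ≤ 2 C₁ (r - r_e)^β |Φ(r)|² for all r ∈ (r_e, r_1], where C₁ > 0 and β > -1. Then |Φ| extends continuously to r = r_e (i.e., lim_{r → r_e⁺} |Φ(r)| exists and is finite), and if this limit is 0, then Φ ≡ 0 on (r_e, r_1]. -/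
open Set Filter Topology Real

/-! With `G' = g`, the bound `|f'| ≤ g f` makes `f e^G` nondecreasing and `f e^{-G}` nonincreasing.
The first is bounded below by `0`, so it has a limit at `a⁺`, hence so does `f` as long as `G` does.
If the limit of `f` is `0`, then `f e^{-G}` lies below its limit `0` at `a⁺`, forcing `f = 0`.
For `f = ‖Φ‖²` take `G(r) = 2C₁ (r - r_e)^{β+1} / (β+1)`, which tends to `0` at `r_e` as `β + 1 > 0`. -/

section Gronwall

variable {f f' g G : ℝ → ℝ}

theorem monotoneOn_mul_exp {s : Set ℝ} (hs : Convex ℝ s)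
    (hf : ∀ x ∈ s, HasDerivAt f (f' x) x) (hG : ∀ x ∈ s, HasDerivAt G (g x) x)
    (hbound : ∀ x ∈ s, -(g x * f x) ≤ f' x) :
    MonotoneOn (fun x => f x * exp (G x)) s := by
  have hderiv : ∀ x ∈ s,
      HasDerivAt (fun x => f x * exp (G x)) ((f' x + g x * f x) * exp (G x)) x := fun x hx =>
    ((hf x hx).mul (hG x hx).exp).congr_deriv (by ring)
  refine monotoneOn_of_hasDerivWithinAt_nonneg hs
    (fun x hx => (hderiv x hx).continuousAt.continuousWithinAt)
    (fun x hx => (hderiv x (interior_subset hx)).hasDerivWithinAt) fun x hx => ?_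
  have := hbound x (interior_subset hx)
  exact mul_nonneg (by linarith) (exp_pos _).le

theorem antitoneOn_mul_exp_neg {s : Set ℝ} (hs : Convex ℝ s)
    (hf : ∀ x ∈ s, HasDerivAt f (f' x) x) (hG : ∀ x ∈ s, HasDerivAt G (g x) x)
    (hbound : ∀ x ∈ s, f' x ≤ g x * f x) :
    AntitoneOn (fun x => f x * exp (-G x)) s := by
  have hmono := monotoneOn_mul_exp (f := fun x => -f x) (G := fun x => -G x) hs
    (fun x hx => (hf x hx).neg) (fun x hx => (hG x hx).neg)
    (fun x hx => by simpa [neg_mul_neg] using hbound x hx)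
  intro x hx y hy hxy
  simpa [neg_mul] using hmono hx hy hxy

variable {a b c : ℝ}

theorem exists_tendsto_nhdsGT_of_monotoneOn_mul_exp (hab : a < b)
    (hf₀ : ∀ x ∈ Ioo a b, 0 ≤ f x) (hmono : MonotoneOn (fun x => f x * exp (G x)) (Ioo a b))
    (hG : Tendsto G (𝓝[>] a) (𝓝 c)) :
    ∃ M, Tendsto f (𝓝[>] a) (𝓝 M) := by
  have hbdd : BddBelow ((fun x => f x * exp (G x)) '' Ioo a b) := by
    refine ⟨0, ?_⟩
    rintro _ ⟨x, hx, rfl⟩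
    exact mul_nonneg (hf₀ x hx) (exp_pos _).le
  have hlim := (hmono.tendsto_nhdsWithin_Ioo_right (nonempty_Ioo.2 hab) hbdd).mul
    (hG.neg.rexp)
  refine ⟨_, hlim.congr fun x => ?_⟩
  rw [mul_assoc, ← exp_add, add_neg_cancel, exp_zero, mul_one]

theorem AntitoneOn.le_of_tendsto_nhdsGT {h : ℝ → ℝ} {L : ℝ} (hanti : AntitoneOn h (Ioc a b))
    (hh : Tendsto h (𝓝[>] a) (𝓝 L)) {x : ℝ} (hx : x ∈ Ioc a b) : h x ≤ L := by
  refine ge_of_tendsto hh ?_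
  filter_upwards [Ioo_mem_nhdsGT hx.1] with y hy
  exact hanti ⟨hy.1, hy.2.le.trans hx.2⟩ hx hy.2.le

theorem eqOn_zero_of_antitoneOn_mul_exp_neg (hf₀ : ∀ x ∈ Ioc a b, 0 ≤ f x)
    (hanti : AntitoneOn (fun x => f x * exp (-G x)) (Ioc a b))
    (hG : Tendsto G (𝓝[>] a) (𝓝 c)) (hf : Tendsto f (𝓝[>] a) (𝓝 0)) :
    EqOn f 0 (Ioc a b) := by
  intro x hx
  have hle : f x * exp (-G x) ≤ 0 :=
    hanti.le_of_tendsto_nhdsGT (by simpa using hf.mul hG.neg.rexp) hx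
  exact le_antisymm (nonpos_of_mul_nonpos_left hle (exp_pos _)) (hf₀ x hx)

theorem exists_tendsto_nhdsGT_of_abs_deriv_le (hab : a < b) (hf₀ : ∀ x ∈ Ioc a b, 0 ≤ f x)
    (hf : ∀ x ∈ Ioc a b, HasDerivAt f (f' x) x) (hG : ∀ x ∈ Ioc a b, HasDerivAt G (g x) x)
    (hGa : Tendsto G (𝓝[>] a) (𝓝 c)) (hbound : ∀ x ∈ Ioc a b, |f' x| ≤ g x * f x) :
    ∃ M, Tendsto f (𝓝[>] a) (𝓝 M) ∧ (M = 0 → EqOn f 0 (Ioc a b)) := by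
  have hmono := monotoneOn_mul_exp (convex_Ioc a b) hf hG fun x hx =>
    neg_le_of_abs_le (hbound x hx)
  obtain ⟨M, hM⟩ := exists_tendsto_nhdsGT_of_monotoneOn_mul_exp hab
    (fun x hx => hf₀ x (Ioo_subset_Ioc_self hx)) (hmono.mono Ioo_subset_Ioc_self) hGa
  refine ⟨M, hM, ?_⟩
  rintro rfl
  exact eqOn_zero_of_antitoneOn_mul_exp_neg hf₀
    (antitoneOn_mul_exp_neg (convex_Ioc a b) hf hG fun x hx => le_of_abs_le (hbound x hx))
    hGa hM

end Gronwall

theorem hasDerivAt_sub_rpow_add_one_div {a x p : ℝ} (hx : a < x) (hp : p + 1 ≠ 0) :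
    HasDerivAt (fun r => (r - a) ^ (p + 1) / (p + 1)) ((x - a) ^ p) x := by
  have := (((hasDerivAt_id x).sub_const a).rpow_const (p := p + 1)
    (Or.inl (sub_pos.2 hx).ne')).div_const (p + 1)
  refine this.congr_deriv ?_
  rw [add_sub_cancel_right, id]
  field_simp

theorem tendsto_sub_rpow_nhdsGT {a p : ℝ} (hp : 0 < p) :
    Tendsto (fun r => (r - a) ^ p) (𝓝[>] a) (𝓝 0) := by
  have hcont : Continuous fun r : ℝ => (r - a) ^ p :=
    (continuous_sub_right a).rpow_const fun _ => Or.inr hp.le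
  simpa [zero_rpow hp.ne'] using (hcont.tendsto a).mono_left nhdsWithin_le_nhds

theorem stmt2_general (n : ℕ) (re r1 : ℝ) (hlt : re < r1)
    (Φ : ℝ → EuclideanSpace ℂ (Fin n)) (C₁ β : ℝ) (hβ : -1 < β)
    (D : ℝ → ℝ)
    (hD : ∀ r ∈ Ioc re r1, HasDerivAt (fun s => ‖Φ s‖ ^ 2) (D r) r)
    (hbound : ∀ r ∈ Ioc re r1, |D r| ≤ 2 * C₁ * (r - re) ^ β * ‖Φ r‖ ^ 2) :
    ∃ L : ℝ, Tendsto (fun r => ‖Φ r‖) (nhdsWithin re (Ioi re)) (nhds L) ∧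
      (L = 0 → ∀ r ∈ Ioc re r1, Φ r = 0) := by
  have hβ₁ : 0 < β + 1 := by linarith
  have hG : ∀ r ∈ Ioc re r1, HasDerivAt (fun s => 2 * C₁ * ((s - re) ^ (β + 1) / (β + 1)))
      (2 * C₁ * (r - re) ^ β) r := fun r hr =>
    (hasDerivAt_sub_rpow_add_one_div hr.1 hβ₁.ne').const_mul _
  have hGa : Tendsto (fun s => 2 * C₁ * ((s - re) ^ (β + 1) / (β + 1))) (𝓝[>] re) (𝓝 0) := by
    simpa using ((tendsto_sub_rpow_nhdsGT hβ₁).div_const (β + 1)).const_mul (2 * C₁)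
  obtain ⟨M, hM, hzero⟩ := exists_tendsto_nhdsGT_of_abs_deriv_le hlt
    (fun r _ => by positivity) hD hG hGa hbound
  refine ⟨√M, ?_, fun hL r hr => ?_⟩
  · simpa using hM.sqrt
  · have hsq : Tendsto (fun s => ‖Φ s‖ ^ 2) (𝓝[>] re) (𝓝 0) := by
      simpa [hL] using hM.sqrt.pow 2
    simpa using hzero (tendsto_nhds_unique hM hsq) hr

theorem stmt2 (n : ℕ) (re r1 : ℝ) (hlt : re < r1)
    (Φ : ℝ → EuclideanSpace ℂ (Fin n)) (C₁ β : ℝ) (hC₁ : 0 < C₁) (hβ : -1 < β)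
    (D : ℝ → ℝ)
    (hD : ∀ r ∈ Ioc re r1, HasDerivAt (fun s => ‖Φ s‖ ^ 2) (D r) r)
    (hbound : ∀ r ∈ Ioc re r1, |D r| ≤ 2 * C₁ * (r - re) ^ β * ‖Φ r‖ ^ 2) :
    ∃ L : ℝ, Tendsto (fun r => ‖Φ r‖) (nhdsWithin re (Ioi re)) (nhds L) ∧
      (L = 0 → ∀ r ∈ Ioc re r1, Φ r = 0) :=
  stmt2_general n re r1 hlt Φ C₁ β hβ D hD hbound
end

section
/- Let X_+, X_- : [r_1, ∞) → ℂ satisfy the radial system X_+' = iα X_+ + (iβ + γ) X_-, X_-' = -iα X_- - (iβ - γ) X_+ with α, β, γ : [r_1, ∞) → ℝ continuous, and suppose β(r) - |α(r)| ≥ q/r for all r ≥ r_2 ≥ r_1 (some q > 0), and |X_+|² - |X_-|² = C with C ≠ 0. Then lim_{r→∞} (|X_+(r)|² + |X_-(r)|²) = ∞; in fact |X_+(r)|² + |X_-(r)|² ≥ C₁ r^{2q} for some C₁ > 0 and all sufficiently large r. -/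
/-!
The cross term `F = i(conj X₊ X₋ - conj X₋ X₊)` is bounded by `N = |X₊|² + |X₋|²`, and
along the system `F' ≥ 2(β - |α|) N ≥ (2q/r) N`. Conservation gives `N ≥ |C| > 0`, so
`F' ≥ 2q|C|/r` and `F → ∞` logarithmically; once `F > 0`, the inequality `F' ≥ (2q/r) F`
makes `F / r^{2q}` nondecreasing, hence `N ≥ F ≥ C₁ r^{2q}`.
-/

open Complex Set Filter Topology

section Growth

variable {F F' : ℝ → ℝ} {a : ℝ}

lemma monotoneOn_Ici_of_hasDerivAt_nonneg (hF : ∀ x ∈ Ici a, HasDerivAt F (F' x) x)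
    (hF' : ∀ x ∈ Ici a, 0 ≤ F' x) : MonotoneOn F (Ici a) := by
  refine monotoneOn_of_hasDerivWithinAt_nonneg (convex_Ici a)
    (fun x hx => (hF x hx).continuousAt.continuousWithinAt)
    (fun x hx => (hF x (interior_subset hx)).hasDerivWithinAt)
    (fun x hx => hF' x (interior_subset hx))

lemma tendsto_atTop_of_div_le_hasDerivAt {k : ℝ} (ha : 0 < a) (hk : 0 < k)
    (hF : ∀ x ∈ Ici a, HasDerivAt F (F' x) x) (hF' : ∀ x ∈ Ici a, k / x ≤ F' x) :
    Tendsto F atTop atTop := by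
  have hpos : ∀ x ∈ Ici a, 0 < x := fun x hx => ha.trans_le hx
  have hmono : MonotoneOn (fun x => F x - k * Real.log x) (Ici a) := by
    refine monotoneOn_Ici_of_hasDerivAt_nonneg
      (fun x hx => (hF x hx).sub ((Real.hasDerivAt_log (hpos x hx).ne').const_mul k))
      (fun x hx => ?_)
    have := hF' x hx
    rw [div_eq_mul_inv] at this
    linarith
  have hlog : Tendsto (fun x => F a - k * Real.log a + k * Real.log x) atTop atTop :=
    tendsto_atTop_add_const_left _ _ (Real.tendsto_log_atTop.const_mul_atTop hk)
  refine tendsto_atTop_mono' atTop ?_ hlog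
  filter_upwards [eventually_ge_atTop a] with x hx
  have := hmono self_mem_Ici hx hx
  dsimp only at this
  linarith

lemma monotoneOn_div_rpow_of_mul_le_hasDerivAt {p : ℝ} (ha : 0 < a)
    (hF : ∀ x ∈ Ici a, HasDerivAt F (F' x) x) (hF' : ∀ x ∈ Ici a, p / x * F x ≤ F' x) :
    MonotoneOn (fun x => F x / x ^ p) (Ici a) := by
  have hpos : ∀ x ∈ Ici a, 0 < x := fun x hx => ha.trans_le hx
  refine monotoneOn_Ici_of_hasDerivAt_nonneg (fun x hx => (hF x hx).div
    (Real.hasDerivAt_rpow_const (Or.inl (hpos x hx).ne'))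
    (Real.rpow_pos_of_pos (hpos x hx) p).ne') (fun x hx => ?_)
  have hxp : 0 < x ^ p := Real.rpow_pos_of_pos (hpos x hx) p
  have hnum : F' x * x ^ p - F x * (p * x ^ (p - 1)) = x ^ p * (F' x - p / x * F x) := by
    rw [Real.rpow_sub_one (hpos x hx).ne']
    ring
  rw [hnum]
  have := hF' x hx
  exact div_nonneg (mul_nonneg hxp.le (by linarith)) (sq_nonneg _)

lemma exists_mul_rpow_le_of_hasDerivAt {N : ℝ → ℝ} {p c : ℝ} (ha : 0 < a) (hp : 0 < p)
    (hc : 0 < c) (hF : ∀ x ∈ Ici a, HasDerivAt F (F' x) x)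
    (hF' : ∀ x ∈ Ici a, p / x * N x ≤ F' x) (hFN : ∀ x ∈ Ici a, F x ≤ N x)
    (hcN : ∀ x ∈ Ici a, c ≤ N x) :
    ∃ C₁ > 0, ∀ᶠ x in atTop, C₁ * x ^ p ≤ F x := by
  have hpx : ∀ x ∈ Ici a, 0 ≤ p / x := fun x hx => div_nonneg hp.le (ha.trans_le hx).le
  have hFtop : Tendsto F atTop atTop :=
    tendsto_atTop_of_div_le_hasDerivAt ha (mul_pos hp hc) hF fun x hx => by
      rw [mul_div_right_comm]
      exact (mul_le_mul_of_nonneg_left (hcN x hx) (hpx x hx)).trans (hF' x hx)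
  have hmono : MonotoneOn (fun x => F x / x ^ p) (Ici a) :=
    monotoneOn_div_rpow_of_mul_le_hasDerivAt ha hF fun x hx =>
      (mul_le_mul_of_nonneg_left (hFN x hx) (hpx x hx)).trans (hF' x hx)
  obtain ⟨b, hFb, hab⟩ := ((hFtop.eventually_gt_atTop 0).and (eventually_ge_atTop a)).exists
  refine ⟨F b / b ^ p, div_pos hFb (Real.rpow_pos_of_pos (ha.trans_le hab) p), ?_⟩
  filter_upwards [eventually_ge_atTop b] with x hx
  rw [← le_div_iff₀ (Real.rpow_pos_of_pos (ha.trans_le (hab.trans hx)) p)]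
  exact hmono hab (hab.trans hx) hx

end Growth

section CrossTerm

/-- The paper's `F = i(conj X₊ X₋ - conj X₋ X₊)` at `(X₊, X₋) = (a, b)`, using
`conj a * b - conj b * a = 2i Im (conj a * b)`. -/
noncomputable def crossTerm (a b : ℂ) : ℝ := -2 * (starRingEnd ℂ a * b).im

lemma crossTerm_le (a b : ℂ) : crossTerm a b ≤ ‖a‖ ^ 2 + ‖b‖ ^ 2 := by
  simp only [crossTerm, Complex.sq_norm, normSq_apply, mul_im, conj_re, conj_im]
  nlinarith [sq_nonneg (a.re + b.im), sq_nonneg (a.im - b.re)]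

lemma hasDerivAt_crossTerm {f g : ℝ → ℂ} {f' g' : ℂ} {x : ℝ} (hf : HasDerivAt f f' x)
    (hg : HasDerivAt g g' x) :
    HasDerivAt (fun s => crossTerm (f s) (g s))
      (-2 * (starRingEnd ℂ f' * g x + starRingEnd ℂ (f x) * g').im) x := by
  have hconj : HasDerivAt (fun s => starRingEnd ℂ (f s)) (starRingEnd ℂ f') x :=
    conjCLE.toContinuousLinearMap.hasFDerivAt.comp_hasDerivAt x hf
  exact (imCLM.hasFDerivAt.comp_hasDerivAt x (hconj.mul hg)).const_mul (-2)

lemma sub_abs_mul_le_crossTerm_deriv (a b : ℂ) (A B G : ℝ) :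
    2 * (B - |A|) * (‖a‖ ^ 2 + ‖b‖ ^ 2) ≤
      -2 * (starRingEnd ℂ (I * A * a + (I * B + G) * b) * b
        + starRingEnd ℂ a * (-(I * A) * b - (I * B - G) * a)).im := by
  have hderiv : -2 * (starRingEnd ℂ (I * A * a + (I * B + G) * b) * b
        + starRingEnd ℂ a * (-(I * A) * b - (I * B - G) * a)).im
      = 4 * A * (a.re * b.re + a.im * b.im) + 2 * B * (‖a‖ ^ 2 + ‖b‖ ^ 2) := by
    simp only [Complex.sq_norm, normSq_apply, mul_im, mul_re, add_im, add_re, sub_im, sub_re,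
      neg_im, neg_re, conj_re, conj_im, I_re, I_im, ofReal_re, ofReal_im]
    ring
  have hcs : |2 * (a.re * b.re + a.im * b.im)| ≤ ‖a‖ ^ 2 + ‖b‖ ^ 2 := by
    simp only [Complex.sq_norm, normSq_apply]
    exact abs_le.2 ⟨by nlinarith [sq_nonneg (a.re + b.re), sq_nonneg (a.im + b.im)],
      by nlinarith [sq_nonneg (a.re - b.re), sq_nonneg (a.im - b.im)]⟩
  have hA : -(|A| * (‖a‖ ^ 2 + ‖b‖ ^ 2)) ≤ A * (2 * (a.re * b.re + a.im * b.im)) := by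
    refine le_trans ?_ (neg_abs_le _)
    rw [abs_mul, neg_le_neg_iff]
    exact mul_le_mul_of_nonneg_left hcs (abs_nonneg A)
  rw [hderiv]
  linarith

end CrossTerm

theorem stmt10_general (r1 r2 q C : ℝ) (hr1 : 0 < r1) (hr12 : r1 ≤ r2) (hq : 0 < q)
    (hC : C ≠ 0)
    (Xp Xm : ℝ → ℂ) (α β γ : ℝ → ℝ)
    (hXp : ∀ r ∈ Ici r1, HasDerivAt Xp
      (Complex.I * (α r) * Xp r + (Complex.I * (β r) + (γ r)) * Xm r) r)
    (hXm : ∀ r ∈ Ici r1, HasDerivAt Xm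
      (-(Complex.I * (α r)) * Xm r - (Complex.I * (β r) - (γ r)) * Xp r) r)
    (hβα : ∀ r ∈ Ici r2, β r - |α r| ≥ q / r)
    (hcons : ∀ r ∈ Ici r1, ‖Xp r‖ ^ 2 - ‖Xm r‖ ^ 2 = C) :
    Tendsto (fun r => ‖Xp r‖ ^ 2 + ‖Xm r‖ ^ 2) atTop atTop ∧
    ∃ C₁ > (0 : ℝ), ∃ r4 : ℝ, ∀ r ∈ Ici r4,
      ‖Xp r‖ ^ 2 + ‖Xm r‖ ^ 2 ≥ C₁ * r ^ (2 * q) := by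
  have hr2 : 0 < r2 := hr1.trans_le hr12
  have hsub : Ici r2 ⊆ Ici r1 := Ici_subset_Ici.mpr hr12
  have hF' : ∀ r ∈ Ici r2, 2 * q / r * (‖Xp r‖ ^ 2 + ‖Xm r‖ ^ 2) ≤
      -2 * (starRingEnd ℂ (I * α r * Xp r + (I * β r + γ r) * Xm r) * Xm r
        + starRingEnd ℂ (Xp r) * (-(I * α r) * Xm r - (I * β r - γ r) * Xp r)).im := by
    intro r hr
    refine le_trans ?_ (sub_abs_mul_le_crossTerm_deriv (Xp r) (Xm r) (α r) (β r) (γ r))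
    rw [mul_div_assoc]
    gcongr
    exact hβα r hr
  have hCN : ∀ r ∈ Ici r2, |C| ≤ ‖Xp r‖ ^ 2 + ‖Xm r‖ ^ 2 := fun r hr => by
    have hp : 0 ≤ ‖Xp r‖ ^ 2 := by positivity
    have hm : 0 ≤ ‖Xm r‖ ^ 2 := by positivity
    rw [← hcons r (hsub hr)]
    exact abs_sub_le_of_nonneg_of_le hp (le_add_of_nonneg_right hm) hm
      (le_add_of_nonneg_left hp)
  obtain ⟨C₁, hC₁, hbound⟩ := exists_mul_rpow_le_of_hasDerivAt hr2 (by positivity)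
    (abs_pos.mpr hC) (fun r hr => hasDerivAt_crossTerm (hXp r (hsub hr)) (hXm r (hsub hr)))
    hF' (fun r _ => crossTerm_le (Xp r) (Xm r)) hCN
  have hN : ∀ᶠ r in atTop, C₁ * r ^ (2 * q) ≤ ‖Xp r‖ ^ 2 + ‖Xm r‖ ^ 2 :=
    hbound.mono fun r hr => hr.trans (crossTerm_le (Xp r) (Xm r))
  have hgrowth := (tendsto_rpow_atTop (by positivity : 0 < 2 * q)).const_mul_atTop hC₁
  exact ⟨tendsto_atTop_mono' atTop hN hgrowth, C₁, hC₁, eventually_atTop.mp hN⟩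

theorem stmt10 (r1 r2 q C : ℝ) (hr1 : 0 < r1) (hr12 : r1 ≤ r2) (hq : 0 < q)
    (hC : C ≠ 0)
    (Xp Xm : ℝ → ℂ) (α β γ : ℝ → ℝ)
    (hα : ContinuousOn α (Ici r1)) (hβ : ContinuousOn β (Ici r1))
    (hγ : ContinuousOn γ (Ici r1))
    (hXp : ∀ r ∈ Ici r1, HasDerivAt Xp
      (Complex.I * (α r) * Xp r + (Complex.I * (β r) + (γ r)) * Xm r) r)
    (hXm : ∀ r ∈ Ici r1, HasDerivAt Xm
      (-(Complex.I * (α r)) * Xm r - (Complex.I * (β r) - (γ r)) * Xp r) r)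
    (hβα : ∀ r ∈ Ici r2, β r - |α r| ≥ q / r)
    (hcons : ∀ r ∈ Ici r1, ‖Xp r‖ ^ 2 - ‖Xm r‖ ^ 2 = C) :
    Tendsto (fun r => ‖Xp r‖ ^ 2 + ‖Xm r‖ ^ 2) atTop atTop ∧
    ∃ C₁ > (0 : ℝ), ∃ r4 : ℝ, ∀ r ∈ Ici r4,
      ‖Xp r‖ ^ 2 + ‖Xm r‖ ^ 2 ≥ C₁ * r ^ (2 * q) :=
  stmt10_general r1 r2 q C hr1 hr12 hq hC Xp Xm α β γ hXp hXm hβα hcons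
end

section
/- Let X_+, X_- : (r_e, ∞) → ℂ satisfy the radial Dirac system X_+' = iα X_+ + (iβ + γ)X_-, X_-' = -iα X_- - (iβ - γ)X_+ with α, β, γ real continuous on (r_e, ∞), and suppose: (i) |X_+(r)|² = |X_-(r)|² for all r > r_e, (ii) both X_± extend continuously to r_e, and (iii) X_+(r_e) = 0 or X_-(r_e) = 0. Then X_+ ≡ 0 and X_- ≡ 0 on [r_e, r_1] for any r_1 > r_e such that the Grönwall bound |d/dr(|X_+|² + |X_-|²)| ≤ g(r)(|X_+|² + |X_-|²) holds on (r_e, r_1] with g integrable. -/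
open Complex Set Filter Topology MeasureTheory

/-! Passing to the limit `r → r_e` in `|X₊|² = |X₋|²` shows that if one component vanishes at
`r_e`, both do, so `f = |X₊|² + |X₋|²` vanishes there. The Grönwall bound `|f'| ≤ g f` with `g`
integrable then forces `f ≡ 0`: since `f ≤ F := ∫ |g| f`, on any short interval beyond a zero of
the nondecreasing function `F` one gets `F ≤ F / 2`. -/

theorem eventually_intervalIntegral_lt_nhdsGT {h : ℝ → ℝ} {x b ε : ℝ} (hxb : x < b)
    (hh : IntegrableOn h (Icc x b)) (hε : 0 < ε) : ∀ᶠ t in 𝓝[>] x, ∫ s in x..t, h s < ε := by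
  rw [← uIcc_of_le hxb.le] at hh
  have hcont := intervalIntegral.continuousOn_primitive_interval hh
  rw [uIcc_of_le hxb.le] at hcont
  have hlim := (hcont x (left_mem_Icc.2 hxb.le)).mono_left
    (nhdsWithin_le_of_mem (Icc_mem_nhdsGT hxb))
  simp only [intervalIntegral.integral_same] at hlim
  exact hlim.eventually (eventually_lt_nhds hε)

theorem eqOn_zero_of_le_integral_mul {f h : ℝ → ℝ} {a b : ℝ} (hf : ContinuousOn f (Icc a b))
    (hf0 : ∀ t ∈ Icc a b, 0 ≤ f t) (hh : IntegrableOn h (Icc a b))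
    (hh0 : ∀ t ∈ Icc a b, 0 ≤ h t) (hle : ∀ t ∈ Icc a b, f t ≤ ∫ s in a..t, h s * f s) :
    EqOn f 0 (Icc a b) := by
  intro t ht
  have hab : a ≤ b := ht.1.trans ht.2
  set F : ℝ → ℝ := fun u => ∫ s in a..u, h s * f s
  have hhf : IntegrableOn (fun s => h s * f s) (Icc a b) := hh.mul_continuousOn hf isCompact_Icc
  have hhf_int : ∀ x ∈ Icc a b, ∀ y ∈ Icc a b, IntervalIntegrable (fun s => h s * f s) volume x y :=
    fun x hx y hy => (hhf.mono_set (uIcc_subset_Icc hx hy)).intervalIntegrable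
  have hF : ContinuousOn F (Icc a b) := by
    rw [← uIcc_of_le hab] at hhf ⊢
    exact intervalIntegral.continuousOn_primitive_interval hhf
  have hF_mono : MonotoneOn F (Icc a b) := by
    intro x hx y hy hxy
    refine intervalIntegral.integral_mono_interval le_rfl hx.1 hxy ?_ (hhf_int a ⟨le_rfl, hab⟩ y hy)
    exact (ae_restrict_iff' measurableSet_Ioc).2 <| Eventually.of_forall fun s hs =>
      mul_nonneg (hh0 s ⟨hs.1.le, hs.2.trans hy.2⟩) (hf0 s ⟨hs.1.le, hs.2.trans hy.2⟩)
  have hF_zero : Icc a b ⊆ {t | F t = 0} := by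
    refine IsClosed.Icc_subset_of_forall_mem_nhdsWithin ?_ (by simp [F]) ?_
    · rw [inter_comm]
      exact hF.preimage_isClosed_of_isClosed isClosed_Icc isClosed_singleton
    rintro x ⟨hFx, hxa, hxb⟩
    have hx : x ∈ Icc a b := ⟨hxa, hxb.le⟩
    filter_upwards [eventually_intervalIntegral_lt_nhdsGT hxb
      (hh.mono_set (Icc_subset_Icc_left hxa)) one_half_pos, Ioc_mem_nhdsGT hxb] with t hsmall ht
    have htab : t ∈ Icc a b := ⟨hxa.trans ht.1.le, ht.2⟩
    have hFt0 : 0 ≤ F t := hFx ▸ hF_mono hx htab ht.1.le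
    have hadd : F x + ∫ s in x..t, h s * f s = F t :=
      intervalIntegral.integral_add_adjacent_intervals (hhf_int a ⟨le_rfl, hab⟩ x hx)
        (hhf_int x hx t htab)
    have hle_half : F t ≤ 1 / 2 * F t := calc
      F t = ∫ s in x..t, h s * f s := by rw [← hadd, show F x = 0 from hFx, zero_add]
      _ ≤ ∫ s in x..t, h s * F t := by
        refine intervalIntegral.integral_mono_on ht.1.le (hhf_int x hx t htab)
          ((hh.mono_set (uIcc_subset_Icc hx htab)).intervalIntegrable.mul_const _)
          fun s hs => ?_
        have hsab : s ∈ Icc a b := ⟨hxa.trans hs.1, hs.2.trans ht.2⟩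
        exact mul_le_mul_of_nonneg_left ((hle s hsab).trans (hF_mono hsab htab hs.2)) (hh0 s hsab)
      _ = (∫ s in x..t, h s) * F t := intervalIntegral.integral_mul_const _ _
      _ ≤ 1 / 2 * F t := mul_le_mul_of_nonneg_right hsmall.le hFt0
    show F t = 0
    linarith
  exact le_antisymm ((hle t ht).trans (hF_zero ht).le) (hf0 t ht)

theorem eqOn_zero_of_abs_deriv_le_mul {f f' g : ℝ → ℝ} {a b : ℝ} (hf : ContinuousOn f (Icc a b))
    (hf0 : ∀ t ∈ Icc a b, 0 ≤ f t) (hfa : f a = 0) (hderiv : ∀ t ∈ Ioo a b, HasDerivAt f (f' t) t)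
    (hg : IntegrableOn g (Icc a b)) (hbound : ∀ t ∈ Ioo a b, |f' t| ≤ g t * f t) :
    EqOn f 0 (Icc a b) := by
  refine eqOn_zero_of_le_integral_mul hf hf0 hg.abs (fun t _ => abs_nonneg (g t)) fun t ht => ?_
  have hsub : Icc a t ⊆ Icc a b := Icc_subset_Icc_right ht.2
  have hderiv_le : ∀ s ∈ Ioo a t, f' s ≤ |g s| * f s := fun s hs => by
    have hs' : s ∈ Ioo a b := ⟨hs.1, hs.2.trans_le ht.2⟩
    calc f' s ≤ |f' s| := le_abs_self _
      _ ≤ g s * f s := hbound s hs'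
      _ ≤ |g s| * f s :=
        mul_le_mul_of_nonneg_right (le_abs_self _) (hf0 s (Ioo_subset_Icc_self hs'))
  have hFTC := intervalIntegral.sub_le_integral_of_hasDeriv_right_of_le ht.1 (hf.mono hsub)
    (fun s hs => (hderiv s ⟨hs.1, hs.2.trans_le ht.2⟩).hasDerivWithinAt)
    ((IntegrableOn.mono_set hg.abs hsub).mul_continuousOn (hf.mono hsub) isCompact_Icc) hderiv_le
  rwa [hfa, sub_zero] at hFTC

theorem stmt12_general (re r1 : ℝ)
    (Xp Xm : ℝ → ℂ)
    (heq : ∀ r ∈ Ioi re, ‖Xp r‖ ^ 2 = ‖Xm r‖ ^ 2)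
    (hcontp : ContinuousWithinAt Xp (Ioi re) re)
    (hcontm : ContinuousWithinAt Xm (Ioi re) re)
    (hzero : Xp re = 0 ∨ Xm re = 0)
    (g D : ℝ → ℝ)
    (hgint : IntegrableOn g (Ioc re r1))
    (hD : ∀ r ∈ Ioc re r1, HasDerivAt (fun s => ‖Xp s‖ ^ 2 + ‖Xm s‖ ^ 2) (D r) r)
    (hgron : ∀ r ∈ Ioc re r1, |D r| ≤ g r * (‖Xp r‖ ^ 2 + ‖Xm r‖ ^ 2)) :
    ∀ r ∈ Icc re r1, Xp r = 0 ∧ Xm r = 0 := by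
  have hnorm_re : ‖Xp re‖ ^ 2 = ‖Xm re‖ ^ 2 :=
    tendsto_nhds_unique (hcontp.norm.pow 2)
      ((hcontm.norm.pow 2).congr' (eventually_nhdsWithin_of_forall fun r hr => (heq r hr).symm))
  have hzero_re : ‖Xp re‖ ^ 2 + ‖Xm re‖ ^ 2 = 0 := by
    rcases hzero with h | h
    · rw [← hnorm_re, h, norm_zero]; ring
    · rw [hnorm_re, h, norm_zero]; ring
  have hcont : ContinuousOn (fun s => ‖Xp s‖ ^ 2 + ‖Xm s‖ ^ 2) (Icc re r1) := by
    intro r hr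
    rcases hr.1.eq_or_lt with rfl | hr_gt
    · exact (continuousWithinAt_Ioi_iff_Ici.1 ((hcontp.norm.pow 2).add (hcontm.norm.pow 2))).mono
        Icc_subset_Ici_self
    · exact (hD r ⟨hr_gt, hr.2⟩).continuousAt.continuousWithinAt
  have hvanish := eqOn_zero_of_abs_deriv_le_mul hcont (fun _ _ => by positivity) hzero_re
    (fun r hr => hD r (Ioo_subset_Ioc_self hr)) ((integrableOn_Icc_iff_integrableOn_Ioc).2 hgint)
    (fun r hr => hgron r (Ioo_subset_Ioc_self hr))
  intro r hr
  simpa [add_eq_zero_iff_of_nonneg] using hvanish hr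

theorem stmt12 (re r1 : ℝ) (hlt : re < r1)
    (Xp Xm : ℝ → ℂ) (α β γ : ℝ → ℝ)
    (hα : ContinuousOn α (Ioi re)) (hβ : ContinuousOn β (Ioi re))
    (hγ : ContinuousOn γ (Ioi re))
    (hXp : ∀ r ∈ Ioi re, HasDerivAt Xp
      (Complex.I * (α r) * Xp r + (Complex.I * (β r) + (γ r)) * Xm r) r)
    (hXm : ∀ r ∈ Ioi re, HasDerivAt Xm
      (-(Complex.I * (α r)) * Xm r - (Complex.I * (β r) - (γ r)) * Xp r) r)
    (heq : ∀ r ∈ Ioi re, ‖Xp r‖ ^ 2 = ‖Xm r‖ ^ 2)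
    (hcontp : ContinuousWithinAt Xp (Ioi re) re)
    (hcontm : ContinuousWithinAt Xm (Ioi re) re)
    (hXpre : Tendsto Xp (nhdsWithin re (Ioi re)) (nhds (Xp re)))
    (hXmre : Tendsto Xm (nhdsWithin re (Ioi re)) (nhds (Xm re)))
    (hzero : Xp re = 0 ∨ Xm re = 0)
    (g D : ℝ → ℝ)
    (hgint : IntegrableOn g (Ioc re r1))
    (hD : ∀ r ∈ Ioc re r1, HasDerivAt (fun s => ‖Xp s‖ ^ 2 + ‖Xm s‖ ^ 2) (D r) r)
    (hgron : ∀ r ∈ Ioc re r1, |D r| ≤ g r * (‖Xp r‖ ^ 2 + ‖Xm r‖ ^ 2)) :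
    ∀ r ∈ Icc re r1, Xp r = 0 ∧ Xm r = 0 :=
  stmt12_general re r1 Xp Xm heq hcontp hcontm hzero g D hgint hD hgron
end
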